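/- arXiv:2411.00825 — 7 statements merged into one kernel-verified Lean document; each statement's English description precedes it below -/
import Mathlib

section
/- (Incentive-compatibility constraint in posterior form.) For every λ ∈ (0,1) and every tagging policy π with τ_0 > 0 and τ_1 > 0, the agent's conditional payoff difference equals the posterior expectation of the score-weighted payoff: v̄_A(1) − v̄_A(0) = Σ_{σ∈{0,1}} τ_σ · [ (μ_σ − λ)/(λ(1−λ)) ] · μ_σ, where v̄_A(ω) = Σ_{σ∈{0,1}} L_σ(ω)·μ_σ. -/
/-- Distorted likelihood of a tag σ given state ω = 0:
L_σ(0) = (1−ε0)·π(σ|0) + ε0·π(σ|1), where (pσ0, pσ1) = (π(σ|0), π(σ|1)). -/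
def L0 (ε0 pσ0 pσ1 : ℝ) : ℝ := (1 - ε0) * pσ0 + ε0 * pσ1

/-- Distorted likelihood of a tag σ given state ω = 1:
L_σ(1) = ε1·π(σ|0) + (1−ε1)·π(σ|1). -/
def L1 (ε1 pσ0 pσ1 : ℝ) : ℝ := ε1 * pσ0 + (1 - ε1) * pσ1

/-- Probability of tag σ: τ_σ = (1−λ)·L_σ(0) + λ·L_σ(1). -/
def tagProb (ε0 ε1 lam pσ0 pσ1 : ℝ) : ℝ :=
  (1 - lam) * L0 ε0 pσ0 pσ1 + lam * L1 ε1 pσ0 pσ1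

/-- Bayesian posterior probability of ω = 1 given tag σ: μ_σ = λ·L_σ(1)/τ_σ. -/
noncomputable def post (ε0 ε1 lam pσ0 pσ1 : ℝ) : ℝ :=
  lam * L1 ε1 pσ0 pσ1 / tagProb ε0 ε1 lam pσ0 pσ1

lemma per_tag (ε0 ε1 lam p0 p1 : ℝ) (hl0 : lam ≠ 0) (hl1 : (1:ℝ) - lam ≠ 0)
    (hτ : 0 < tagProb ε0 ε1 lam p0 p1) :
    tagProb ε0 ε1 lam p0 p1 * ((post ε0 ε1 lam p0 p1 - lam) / (lam * (1 - lam)))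
        * post ε0 ε1 lam p0 p1
      = (L1 ε1 p0 p1 - L0 ε0 p0 p1) * post ε0 ε1 lam p0 p1 := by
  have hτ' : tagProb ε0 ε1 lam p0 p1 ≠ 0 := ne_of_gt hτ
  unfold post
  field_simp
  unfold tagProb
  ring

/-- Incentive-compatibility constraint in posterior form: for every λ ∈ (0,1) and
every tagging policy π with τ_0 > 0 and τ_1 > 0, the agent's conditional payoff
difference equals the posterior expectation of the score-weighted payoff:
v̄_A(1) − v̄_A(0) = Σ_σ τ_σ·[(μ_σ − λ)/(λ(1−λ))]·μ_σ,
where v̄_A(ω) = Σ_σ L_σ(ω)·μ_σ. -/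
theorem ic_posterior_form
    (ε0 ε1 lam π00 π01 π10 π11 : ℝ)
    (hε0 : ε0 ∈ Set.Ioo (0 : ℝ) 1) (hε1 : ε1 ∈ Set.Ioo (0 : ℝ) 1)
    (hεsum : ε0 + ε1 < 1)
    (hlam : lam ∈ Set.Ioo (0 : ℝ) 1)
    (h00 : π00 ∈ Set.Icc (0 : ℝ) 1) (h01 : π01 ∈ Set.Icc (0 : ℝ) 1)
    (h10 : π10 ∈ Set.Icc (0 : ℝ) 1) (h11 : π11 ∈ Set.Icc (0 : ℝ) 1)
    (hrow0 : π00 + π10 = 1) (hrow1 : π01 + π11 = 1)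
    (hτ0 : 0 < tagProb ε0 ε1 lam π00 π01)
    (hτ1 : 0 < tagProb ε0 ε1 lam π10 π11) :
    (L1 ε1 π00 π01 * post ε0 ε1 lam π00 π01 + L1 ε1 π10 π11 * post ε0 ε1 lam π10 π11)
      - (L0 ε0 π00 π01 * post ε0 ε1 lam π00 π01 + L0 ε0 π10 π11 * post ε0 ε1 lam π10 π11)
    = tagProb ε0 ε1 lam π00 π01
        * ((post ε0 ε1 lam π00 π01 - lam) / (lam * (1 - lam))) * post ε0 ε1 lam π00 π01
      + tagProb ε0 ε1 lam π10 π11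
        * ((post ε0 ε1 lam π10 π11 - lam) / (lam * (1 - lam))) * post ε0 ε1 lam π10 π11 := by
  have hl0 : lam ≠ 0 := ne_of_gt hlam.1
  have hl1 : (1:ℝ) - lam ≠ 0 := by have := hlam.2; linarith
  rw [per_tag ε0 ε1 lam π00 π01 hl0 hl1 hτ0, per_tag ε0 ε1 lam π10 π11 hl0 hl1 hτ1]
  ring
end

section
/- (Feasible posterior beliefs.) Let ε0, ε1 ∈ (0,1) with ε0 + ε1 < 1 and let λ ∈ [0,1]. For every tagging policy π and every tag σ ∈ {0,1} with τ_σ > 0, the Bayesian posterior satisfies μ̲(λ) ≤ μ_σ ≤ μ̄(λ); in particular 0 ≤ μ̲(λ) ≤ μ_σ ≤ μ̄(λ) ≤ 1. -/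
/-- Lower extreme posterior under fully informative tagging. -/
noncomputable def muLo (ε0 ε1 lam : ℝ) : ℝ :=
  lam * ε1 / ((1 - lam) * (1 - ε0) + lam * ε1)

/-- Upper extreme posterior under fully informative tagging. -/
noncomputable def muHi (ε0 ε1 lam : ℝ) : ℝ :=
  lam * (1 - ε1) / ((1 - lam) * ε0 + lam * (1 - ε1))

lemma aux_bounds (ε0 ε1 lam p0 p1 : ℝ)
    (hε0 : ε0 ∈ Set.Ioo (0 : ℝ) 1) (hε1 : ε1 ∈ Set.Ioo (0 : ℝ) 1)
    (hεsum : ε0 + ε1 < 1)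
    (hlam : lam ∈ Set.Icc (0 : ℝ) 1)
    (h0 : p0 ∈ Set.Icc (0 : ℝ) 1) (h1 : p1 ∈ Set.Icc (0 : ℝ) 1)
    (hτ : 0 < tagProb ε0 ε1 lam p0 p1) :
    0 ≤ muLo ε0 ε1 lam ∧ muLo ε0 ε1 lam ≤ post ε0 ε1 lam p0 p1 ∧
    post ε0 ε1 lam p0 p1 ≤ muHi ε0 ε1 lam ∧ muHi ε0 ε1 lam ≤ 1 := by
  obtain ⟨he00, he01⟩ := hε0
  obtain ⟨he10, he11⟩ := hε1
  obtain ⟨hl0, hl1⟩ := hlam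
  obtain ⟨hp00, hp01⟩ := h0
  obtain ⟨hp10, hp11⟩ := h1
  have hA : 0 < (1 - lam) * (1 - ε0) + lam * ε1 := by nlinarith
  have hB : 0 < (1 - lam) * ε0 + lam * (1 - ε1) := by nlinarith
  simp only [muLo, muHi, post, tagProb, L0, L1] at *
  refine ⟨div_nonneg (by nlinarith) hA.le, ?_, ?_, ?_⟩
  · rw [div_le_div_iff₀ hA hτ]; nlinarith [mul_nonneg (mul_nonneg hl0 (by linarith : (0:ℝ) ≤ 1 - lam)) (mul_nonneg hp10 (by linarith : (0:ℝ) ≤ 1 - ε0 - ε1))]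
  · rw [div_le_div_iff₀ hτ hB]; nlinarith [mul_nonneg (mul_nonneg hl0 (by linarith : (0:ℝ) ≤ 1 - lam)) (mul_nonneg hp00 (by linarith : (0:ℝ) ≤ 1 - ε0 - ε1))]
  · rw [div_le_one hB]; nlinarith

/-- Feasible posterior beliefs: for every tagging policy π and every tag σ ∈ {0,1}
with τ_σ > 0, the Bayesian posterior satisfies μ̲(λ) ≤ μ_σ ≤ μ̄(λ); in particular
0 ≤ μ̲(λ) ≤ μ_σ ≤ μ̄(λ) ≤ 1. -/
theorem feasible_posteriors
    (ε0 ε1 lam π00 π01 π10 π11 : ℝ)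
    (hε0 : ε0 ∈ Set.Ioo (0 : ℝ) 1) (hε1 : ε1 ∈ Set.Ioo (0 : ℝ) 1)
    (hεsum : ε0 + ε1 < 1)
    (hlam : lam ∈ Set.Icc (0 : ℝ) 1)
    (h00 : π00 ∈ Set.Icc (0 : ℝ) 1) (h01 : π01 ∈ Set.Icc (0 : ℝ) 1)
    (h10 : π10 ∈ Set.Icc (0 : ℝ) 1) (h11 : π11 ∈ Set.Icc (0 : ℝ) 1)
    (hrow0 : π00 + π10 = 1) (hrow1 : π01 + π11 = 1) :
    (0 < tagProb ε0 ε1 lam π00 π01 →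
      0 ≤ muLo ε0 ε1 lam ∧ muLo ε0 ε1 lam ≤ post ε0 ε1 lam π00 π01 ∧
      post ε0 ε1 lam π00 π01 ≤ muHi ε0 ε1 lam ∧ muHi ε0 ε1 lam ≤ 1) ∧
    (0 < tagProb ε0 ε1 lam π10 π11 →
      0 ≤ muLo ε0 ε1 lam ∧ muLo ε0 ε1 lam ≤ post ε0 ε1 lam π10 π11 ∧
      post ε0 ε1 lam π10 π11 ≤ muHi ε0 ε1 lam ∧ muHi ε0 ε1 lam ≤ 1) := by
  exact ⟨aux_bounds ε0 ε1 lam π00 π01 hε0 hε1 hεsum hlam h00 h01,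
         aux_bounds ε0 ε1 lam π10 π11 hε0 hε1 hεsum hlam h10 h11⟩
end

section
/- (Necessity of the implementability bound.) Let ε0, ε1 ∈ (0,1) with ε0 + ε1 < 1, λ ∈ (0,1), and let c'(λ) ≥ 0 be the marginal effort cost. If there exists a tagging policy π with τ_0 > 0 and τ_1 > 0 satisfying the incentive-compatibility condition v̄_A(1) − v̄_A(0) = c'(λ), where v̄_A(ω) = Σ_{σ∈{0,1}} L_σ(ω)·μ_σ, then c'(λ) ≤ D·(μ̄(λ) − μ̲(λ)), where D = 1 − ε0 − ε1. -/
lemma post_le_muHi (ε0 ε1 lam p q : ℝ)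
    (hε0 : 0 < ε0) (hε1 : ε1 < 1) (hsum : ε0 + ε1 < 1)
    (hlam0 : 0 < lam) (hlam1 : lam < 1)
    (hp : 0 ≤ p) (hτ : 0 < tagProb ε0 ε1 lam p q) :
    post ε0 ε1 lam p q ≤ muHi ε0 ε1 lam := by
  have hden : 0 < (1 - lam) * ε0 + lam * (1 - ε1) := by
    have := mul_pos (by linarith : (0:ℝ) < 1 - lam) hε0
    have := mul_pos hlam0 (by linarith : (0:ℝ) < 1 - ε1)
    linarith
  rw [post, muHi, div_le_div_iff₀ hτ hden]
  simp only [tagProb, L0, L1]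
  nlinarith [mul_nonneg (mul_nonneg (mul_nonneg hlam0.le
    (by linarith : (0:ℝ) ≤ 1 - lam)) hp) (by linarith : (0:ℝ) ≤ 1 - ε0 - ε1)]

lemma muLo_le_post (ε0 ε1 lam p q : ℝ)
    (hε0 : ε0 < 1) (hε1 : 0 < ε1) (hsum : ε0 + ε1 < 1)
    (hlam0 : 0 < lam) (hlam1 : lam < 1)
    (hq : 0 ≤ q) (hτ : 0 < tagProb ε0 ε1 lam p q) :
    muLo ε0 ε1 lam ≤ post ε0 ε1 lam p q := by
  have hden : 0 < (1 - lam) * (1 - ε0) + lam * ε1 := by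
    have := mul_pos (by linarith : (0:ℝ) < 1 - lam) (by linarith : (0:ℝ) < 1 - ε0)
    have := mul_pos hlam0 hε1
    linarith
  rw [post, muLo, div_le_div_iff₀ hden hτ]
  simp only [tagProb, L0, L1]
  nlinarith [mul_nonneg (mul_nonneg (mul_nonneg hlam0.le
    (by linarith : (0:ℝ) ≤ 1 - lam)) hq) (by linarith : (0:ℝ) ≤ 1 - ε0 - ε1)]

/-- Necessity of the implementability bound: if some tagging policy with τ_0 > 0 and
τ_1 > 0 satisfies the incentive-compatibility condition v̄_A(1) − v̄_A(0) = c'(λ) with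
c'(λ) ≥ 0, then c'(λ) ≤ D·(μ̄(λ) − μ̲(λ)), where D = 1 − ε0 − ε1. -/
theorem implementability_necessity
    (ε0 ε1 lam cp π00 π01 π10 π11 : ℝ)
    (hε0 : ε0 ∈ Set.Ioo (0 : ℝ) 1) (hε1 : ε1 ∈ Set.Ioo (0 : ℝ) 1)
    (hεsum : ε0 + ε1 < 1)
    (hlam : lam ∈ Set.Ioo (0 : ℝ) 1)
    (hcp : 0 ≤ cp)
    (h00 : π00 ∈ Set.Icc (0 : ℝ) 1) (h01 : π01 ∈ Set.Icc (0 : ℝ) 1)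
    (h10 : π10 ∈ Set.Icc (0 : ℝ) 1) (h11 : π11 ∈ Set.Icc (0 : ℝ) 1)
    (hrow0 : π00 + π10 = 1) (hrow1 : π01 + π11 = 1)
    (hτ0 : 0 < tagProb ε0 ε1 lam π00 π01)
    (hτ1 : 0 < tagProb ε0 ε1 lam π10 π11)
    (hIC :
      (L1 ε1 π00 π01 * post ε0 ε1 lam π00 π01 + L1 ε1 π10 π11 * post ε0 ε1 lam π10 π11)
        - (L0 ε0 π00 π01 * post ε0 ε1 lam π00 π01
            + L0 ε0 π10 π11 * post ε0 ε1 lam π10 π11) = cp) :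
    cp ≤ (1 - ε0 - ε1) * (muHi ε0 ε1 lam - muLo ε0 ε1 lam) := by
  obtain ⟨hε00, hε01⟩ := hε0
  obtain ⟨hε10, hε11⟩ := hε1
  obtain ⟨hl0, hl1⟩ := hlam
  set μ0 := post ε0 ε1 lam π00 π01 with hμ0
  set μ1 := post ε0 ε1 lam π10 π11 with hμ1
  have hD : (0:ℝ) < 1 - ε0 - ε1 := by linarith
  -- IC rewrites as cp = D * (π01 - π00) * (μ0 - μ1)
  have hICeq : cp = (1 - ε0 - ε1) * ((π01 - π00) * (μ0 - μ1)) := by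
    rw [← hIC]
    simp only [L0, L1]
    have h10' : π10 = 1 - π00 := by linarith
    have h11' : π11 = 1 - π01 := by linarith
    rw [h10', h11']
    ring
  have b0hi : μ0 ≤ muHi ε0 ε1 lam :=
    post_le_muHi ε0 ε1 lam π00 π01 hε00 hε11 hεsum hl0 hl1 h00.1 hτ0
  have b1hi : μ1 ≤ muHi ε0 ε1 lam :=
    post_le_muHi ε0 ε1 lam π10 π11 hε00 hε11 hεsum hl0 hl1 h10.1 hτ1
  have b0lo : muLo ε0 ε1 lam ≤ μ0 :=
    muLo_le_post ε0 ε1 lam π00 π01 hε01 hε10 hεsum hl0 hl1 h01.1 hτ0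
  have b1lo : muLo ε0 ε1 lam ≤ μ1 :=
    muLo_le_post ε0 ε1 lam π10 π11 hε01 hε10 hεsum hl0 hl1 h11.1 hτ1
  have hd : -1 ≤ π01 - π00 ∧ π01 - π00 ≤ 1 :=
    ⟨by linarith [h00.2, h01.1], by linarith [h00.1, h01.2]⟩
  rw [hICeq]
  have key : (π01 - π00) * (μ0 - μ1) ≤ muHi ε0 ε1 lam - muLo ε0 ε1 lam := by
    rcases le_total μ1 μ0 with h | h
    · nlinarith [hd.1, hd.2]
    · nlinarith [hd.1, hd.2]
  nlinarith [key]
end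

section
/- (Hybrid posterior distribution: probabilities and Bayesian plausibility.) Let ε0, ε1 ∈ (0,1) with ε0 + ε1 < 1, D = 1 − ε0 − ε1, λ ∈ (0,1), and suppose 0 ≤ c'(λ) ≤ D·Δ where Δ = μ̄(λ) − μ̲(λ) > 0. Define weights w̲ = τ̄0(λ)·c'(λ)/(D·Δ), w_mid = 1 − c'(λ)/(D·Δ), w̄ = τ̄1(λ)·c'(λ)/(D·Δ) on the three posteriors μ̲(λ), λ, μ̄(λ), respectively. Then w̲, w_mid, w̄ ≥ 0, w̲ + w_mid + w̄ = 1, and w̲·μ̲(λ) + w_mid·λ + w̄·μ̄(λ) = λ. -/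
/-- Probability of tag 0 under fully informative tagging: τ̄0(λ) = (1−λ)(1−ε0) + λε1. -/
def tauBar0 (ε0 ε1 lam : ℝ) : ℝ := (1 - lam) * (1 - ε0) + lam * ε1

/-- Probability of tag 1 under fully informative tagging: τ̄1(λ) = (1−λ)ε0 + λ(1−ε1). -/
def tauBar1 (ε0 ε1 lam : ℝ) : ℝ := (1 - lam) * ε0 + lam * (1 - ε1)

/-- Hybrid posterior distribution: the weights w̲ = τ̄0(λ)·c'(λ)/(D·Δ),
w_mid = 1 − c'(λ)/(D·Δ), w̄ = τ̄1(λ)·c'(λ)/(D·Δ) on the posteriors μ̲(λ), λ, μ̄(λ)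
are nonnegative, sum to one, and satisfy Bayesian plausibility:
w̲·μ̲(λ) + w_mid·λ + w̄·μ̄(λ) = λ. -/
theorem hybrid_distribution_plausible
    (ε0 ε1 lam cp : ℝ)
    (hε0 : ε0 ∈ Set.Ioo (0 : ℝ) 1) (hε1 : ε1 ∈ Set.Ioo (0 : ℝ) 1)
    (hεsum : ε0 + ε1 < 1)
    (hlam : lam ∈ Set.Ioo (0 : ℝ) 1)
    (hΔpos : 0 < muHi ε0 ε1 lam - muLo ε0 ε1 lam)
    (hcp0 : 0 ≤ cp)
    (hcp1 : cp ≤ (1 - ε0 - ε1) * (muHi ε0 ε1 lam - muLo ε0 ε1 lam)) :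
    let D : ℝ := 1 - ε0 - ε1
    let Δ : ℝ := muHi ε0 ε1 lam - muLo ε0 ε1 lam
    let wLo : ℝ := tauBar0 ε0 ε1 lam * cp / (D * Δ)
    let wMid : ℝ := 1 - cp / (D * Δ)
    let wHi : ℝ := tauBar1 ε0 ε1 lam * cp / (D * Δ)
    0 ≤ wLo ∧ 0 ≤ wMid ∧ 0 ≤ wHi ∧ wLo + wMid + wHi = 1 ∧
      wLo * muLo ε0 ε1 lam + wMid * lam + wHi * muHi ε0 ε1 lam = lam := by
  obtain ⟨h0a, h0b⟩ := hε0
  obtain ⟨h1a, h1b⟩ := hε1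
  obtain ⟨hla, hlb⟩ := hlam
  intro D Δ wLo wMid wHi
  have hD : (0:ℝ) < D := by simp only [D]; linarith
  have hDΔ : 0 < D * Δ := mul_pos hD hΔpos
  have ht0 : 0 < tauBar0 ε0 ε1 lam := by unfold tauBar0; nlinarith
  have ht1 : 0 < tauBar1 ε0 ε1 lam := by unfold tauBar1; nlinarith
  have hmuLo : tauBar0 ε0 ε1 lam * muLo ε0 ε1 lam = lam * ε1 := by
    have h := ht0; unfold tauBar0 at h; unfold tauBar0 muLo
    field_simp
  have hmuHi : tauBar1 ε0 ε1 lam * muHi ε0 ε1 lam = lam * (1 - ε1) := by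
    have h := ht1; unfold tauBar1 at h; unfold tauBar1 muHi
    field_simp
  have hsum : tauBar0 ε0 ε1 lam + tauBar1 ε0 ε1 lam = 1 := by
    unfold tauBar0 tauBar1; ring
  have hratio : cp / (D * Δ) ≤ 1 := by
    rw [div_le_one hDΔ]
    simpa [D, Δ] using hcp1
  refine ⟨div_nonneg (mul_nonneg ht0.le hcp0) hDΔ.le, by show (0:ℝ) ≤ 1 - cp / (D * Δ); linarith,
    div_nonneg (mul_nonneg ht1.le hcp0) hDΔ.le, ?_, ?_⟩
  · show tauBar0 ε0 ε1 lam * cp / (D * Δ) + (1 - cp / (D * Δ)) +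
      tauBar1 ε0 ε1 lam * cp / (D * Δ) = 1
    linear_combination (cp / (D * Δ)) * hsum
  · show tauBar0 ε0 ε1 lam * cp / (D * Δ) * muLo ε0 ε1 lam + (1 - cp / (D * Δ)) * lam +
      tauBar1 ε0 ε1 lam * cp / (D * Δ) * muHi ε0 ε1 lam = lam
    have h1 : tauBar0 ε0 ε1 lam * cp / (D * Δ) * muLo ε0 ε1 lam
        = cp / (D * Δ) * (lam * ε1) := by
      rw [← hmuLo]; ring
    have h2 : tauBar1 ε0 ε1 lam * cp / (D * Δ) * muHi ε0 ε1 lam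
        = cp / (D * Δ) * (lam * (1 - ε1)) := by
      rw [← hmuHi]; ring
    rw [h1, h2]; ring
end

section
/- (Sign of the incentive multiplier.) Fix λ ∈ (0,1), real numbers a ≤ b, a function f : [a,b] → ℝ, and v_S(μ) = μ². Let τ be a finitely supported probability distribution on [a,b] with E_τ[μ] = λ and E_τ[f(μ)] = 0, and let ψ, φ, ρ ∈ ℝ satisfy v_S(μ) + ψ·f(μ) − φ·μ ≤ ρ for all μ ∈ [a,b], with equality for every μ in the support of τ. Let τ̃ be any finitely supported probability distribution on [a,b] with E_{τ̃}[μ] = λ and E_τ[v_S(μ)] ≤ E_{τ̃}[v_S(μ)]. Then ψ·E_{τ̃}[f(μ)] ≤ 0. -/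
/-- Sign of the incentive multiplier: let τ = (w, μ) be a finitely supported
distribution on [a,b] satisfying E_τ[μ] = λ and E_τ[f(μ)] = 0, supported by the
Lagrangian L(μ,ψ,φ) = μ² + ψ·f(μ) − φ·μ ≤ ρ on [a,b] with equality on supp τ.
If τ̃ = (u, ν) is any finitely supported distribution on [a,b] with E_τ̃[μ] = λ and
E_τ[μ²] ≤ E_τ̃[μ²] (e.g. a solution of the relaxed persuasion problem), then
ψ·E_τ̃[f(μ)] ≤ 0. -/
theorem incentive_multiplier_sign
    (lam a b ψ φ ρ : ℝ) (f : ℝ → ℝ)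
    (hlam : lam ∈ Set.Ioo (0 : ℝ) 1) (hab : a ≤ b)
    (n : ℕ) (μ : Fin n → ℝ) (w : Fin n → ℝ)
    (hμ : ∀ i, μ i ∈ Set.Icc a b) (hw : ∀ i, 0 ≤ w i) (hw1 : ∑ i, w i = 1)
    (hmean : ∑ i, w i * μ i = lam) (hic : ∑ i, w i * f (μ i) = 0)
    (hL : ∀ x ∈ Set.Icc a b, x ^ 2 + ψ * f x - φ * x ≤ ρ)
    (hLeq : ∀ i, 0 < w i → (μ i) ^ 2 + ψ * f (μ i) - φ * (μ i) = ρ)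
    (m : ℕ) (ν : Fin m → ℝ) (u : Fin m → ℝ)
    (hν : ∀ j, ν j ∈ Set.Icc a b) (hu : ∀ j, 0 ≤ u j) (hu1 : ∑ j, u j = 1)
    (humean : ∑ j, u j * ν j = lam)
    (hval : ∑ i, w i * (μ i) ^ 2 ≤ ∑ j, u j * (ν j) ^ 2) :
    ψ * (∑ j, u j * f (ν j)) ≤ 0 := by
  have key : ∀ (k : ℕ) (p q : Fin k → ℝ),
      ∑ i, p i * ((q i) ^ 2 + ψ * f (q i) - φ * q i)
        = (∑ i, p i * (q i) ^ 2) + ψ * (∑ i, p i * f (q i)) - φ * (∑ i, p i * q i) := by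
    intro k p q
    rw [Finset.mul_sum, Finset.mul_sum, ← Finset.sum_add_distrib, ← Finset.sum_sub_distrib]
    exact Finset.sum_congr rfl fun i _ => by ring
  have ht : ∑ i, w i * ((μ i) ^ 2 + ψ * f (μ i) - φ * (μ i)) = ρ := by
    have h1 : ∀ i ∈ Finset.univ, w i * ((μ i) ^ 2 + ψ * f (μ i) - φ * (μ i)) = w i * ρ := by
      intro i _
      rcases lt_or_eq_of_le (hw i) with h | h
      · rw [hLeq i h]
      · simp [← h]
    rw [Finset.sum_congr rfl h1, ← Finset.sum_mul, hw1, one_mul]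
  rw [key n w μ, hic, hmean, mul_zero, add_zero] at ht
  have ht2 : ∑ j, u j * ((ν j) ^ 2 + ψ * f (ν j) - φ * (ν j)) ≤ ρ := by
    calc ∑ j, u j * ((ν j) ^ 2 + ψ * f (ν j) - φ * (ν j)) ≤ ∑ j, u j * ρ := by
          exact Finset.sum_le_sum fun j _ =>
            mul_le_mul_of_nonneg_left (hL (ν j) (hν j)) (hu j)
      _ = ρ := by rw [← Finset.sum_mul, hu1, one_mul]
  rw [key m u ν, humean] at ht2
  linarith
end

section
/- (Monotonicity of the fully informative value.) Let ε0, ε1 ∈ (0,1) with ε0 + ε1 < 1 and define Ṽ(λ) = (λε1)²/((1−λ)(1−ε0) + λε1) + (λ(1−ε1))²/((1−λ)ε0 + λ(1−ε1)) for λ ∈ [0,1], i.e., Ṽ(λ) = τ̄0(λ)·μ̲(λ)² + τ̄1(λ)·μ̄(λ)². Then Ṽ is strictly increasing on [0,1]. -/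
/-- Sender's expected utility under fully informative tagging at effort λ:
Ṽ(λ) = (λε1)²/((1−λ)(1−ε0) + λε1) + (λ(1−ε1))²/((1−λ)ε0 + λ(1−ε1)),
i.e. Ṽ(λ) = τ̄0(λ)·μ̲(λ)² + τ̄1(λ)·μ̄(λ)². -/
noncomputable def Vtilde (ε0 ε1 lam : ℝ) : ℝ :=
  (lam * ε1) ^ 2 / ((1 - lam) * (1 - ε0) + lam * ε1)
    + (lam * (1 - ε1)) ^ 2 / ((1 - lam) * ε0 + lam * (1 - ε1))

private lemma den_pos {a c x : ℝ} (ha : 0 < a) (hc : 0 < c)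
    (hx : x ∈ Set.Icc (0 : ℝ) 1) : 0 < (1 - x) * c + x * a := by
  rcases hx with ⟨h0, h1⟩
  rcases eq_or_lt_of_le h0 with h | h
  · simp [← h]; linarith
  · have : (0:ℝ) ≤ (1 - x) * c := mul_nonneg (by linarith) hc.le
    nlinarith [mul_pos h ha]

private lemma hasDerivAt_term (a c x : ℝ) (hd : (1 - x) * c + x * a ≠ 0) :
    HasDerivAt (fun t : ℝ => (t * a) ^ 2 / ((1 - t) * c + t * a))
      (a ^ 2 * x * (((1 - x) * c + x * a) + c) / ((1 - x) * c + x * a) ^ 2) x := by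
  have h1 := ((hasDerivAt_id x).mul_const a).pow 2
  have h2 : HasDerivAt (fun t : ℝ => (1 - t) * c + t * a) ((-1) * c + 1 * a) x := by
    exact (((hasDerivAt_id x).const_sub 1).mul_const c).add ((hasDerivAt_id x).mul_const a)
  have := h1.div h2 hd
  refine this.congr_deriv ?_
  simp only [id, Pi.pow_apply]
  ring

/-- Monotonicity of the fully informative value: for false-alarm rates
ε0, ε1 ∈ (0,1) with ε0 + ε1 < 1, Ṽ is strictly increasing on [0,1]. -/
theorem Vtilde_strictMonoOn
    (ε0 ε1 : ℝ)
    (hε0 : ε0 ∈ Set.Ioo (0 : ℝ) 1) (hε1 : ε1 ∈ Set.Ioo (0 : ℝ) 1)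
    (hεsum : ε0 + ε1 < 1) :
    StrictMonoOn (Vtilde ε0 ε1) (Set.Icc (0 : ℝ) 1) := by
  have ha1 : (0:ℝ) < ε1 := hε1.1
  have hc1 : (0:ℝ) < 1 - ε0 := by linarith [hε0.2]
  have ha2 : (0:ℝ) < 1 - ε1 := by linarith [hε1.2]
  have hc2 : (0:ℝ) < ε0 := hε0.1
  have key : ∀ x ∈ Set.Icc (0:ℝ) 1,
      HasDerivAt (Vtilde ε0 ε1)
        (ε1 ^ 2 * x * (((1 - x) * (1 - ε0) + x * ε1) + (1 - ε0)) / ((1 - x) * (1 - ε0) + x * ε1) ^ 2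
          + (1 - ε1) ^ 2 * x * (((1 - x) * ε0 + x * (1 - ε1)) + ε0) / ((1 - x) * ε0 + x * (1 - ε1)) ^ 2) x := by
    intro x hx
    have hd1 := (den_pos ha1 hc1 hx).ne'
    have hd2 := (den_pos ha2 hc2 hx).ne'
    exact (hasDerivAt_term ε1 (1 - ε0) x hd1).add (hasDerivAt_term (1 - ε1) ε0 x hd2)
  apply strictMonoOn_of_deriv_pos (convex_Icc 0 1)
  · intro x hx
    exact (key x hx).continuousAt.continuousWithinAt
  · intro x hx
    rw [interior_Icc] at hx
    have hx' : x ∈ Set.Icc (0:ℝ) 1 := ⟨hx.1.le, hx.2.le⟩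
    rw [(key x hx').deriv]
    have hd1 := den_pos ha1 hc1 hx'
    have hd2 := den_pos ha2 hc2 hx'
    have h1 : 0 < ε1 ^ 2 * x * (((1 - x) * (1 - ε0) + x * ε1) + (1 - ε0)) / ((1 - x) * (1 - ε0) + x * ε1) ^ 2 := by
      apply div_pos _ (by positivity)
      have : 0 < ((1 - x) * (1 - ε0) + x * ε1) + (1 - ε0) := by linarith
      exact mul_pos (mul_pos (pow_pos ha1 2) hx.1) this
    have h2 : 0 < (1 - ε1) ^ 2 * x * (((1 - x) * ε0 + x * (1 - ε1)) + ε0) / ((1 - x) * ε0 + x * (1 - ε1)) ^ 2 := by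
      apply div_pos _ (by positivity)
      have : 0 < ((1 - x) * ε0 + x * (1 - ε1)) + ε0 := by linarith
      exact mul_pos (mul_pos (pow_pos ha2 2) hx.1) this
    linarith
end

section
/- (Optimality of transparent tagging at maximal implementable effort.) Let ε0, ε1 ∈ (0,1) with ε0 + ε1 < 1, D = 1 − ε0 − ε1, let c be an effort-cost function differentiable on (0,1), and let λ̄ ∈ (0,1) satisfy c'(λ̄) = D·(μ̄(λ̄) − μ̲(λ̄)). Then for every λ ∈ (0, λ̄] and every finitely supported probability distribution τ on [μ̲(λ), μ̄(λ)] satisfying the Bayesian-plausibility constraint E_τ[μ] = λ and the incentive-compatibility constraint E_τ[f_λ(μ)] = 0, one has E_τ[μ²] ≤ τ̄0(λ̄)·μ̲(λ̄)² + τ̄1(λ̄)·μ̄(λ̄)²; that is, the sender's expected utility at any implementable effort is at most the value attained by the fully informative tagging policy at effort λ̄. -/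
/-- Incentive-compatibility integrand in posterior form at effort λ for cost c:
f_λ(μ) = μ·(μ−λ)/(λ(1−λ)) − c'(λ). -/
noncomputable def fIC (c : ℝ → ℝ) (lam μ : ℝ) : ℝ :=
  μ * (μ - lam) / (lam * (1 - lam)) - deriv c lam

set_option maxHeartbeats 1600000 in
/-- Optimality of transparent tagging at maximal implementable effort: if λ̄ ∈ (0,1)
satisfies c'(λ̄) = D·(μ̄(λ̄) − μ̲(λ̄)), then for every λ ∈ (0, λ̄] and every finitely
supported posterior distribution on [μ̲(λ), μ̄(λ)] satisfying Bayesian plausibility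
E[μ] = λ and incentive compatibility E[f_λ(μ)] = 0, the sender's expected utility
E[μ²] is at most τ̄0(λ̄)·μ̲(λ̄)² + τ̄1(λ̄)·μ̄(λ̄)², the value attained by the fully
informative tagging policy at effort λ̄. -/
theorem transparent_tagging_optimal
    (ε0 ε1 lamBar : ℝ) (c : ℝ → ℝ)
    (hε0 : ε0 ∈ Set.Ioo (0 : ℝ) 1) (hε1 : ε1 ∈ Set.Ioo (0 : ℝ) 1)
    (hεsum : ε0 + ε1 < 1)
    (hlamBar : lamBar ∈ Set.Ioo (0 : ℝ) 1)
    (hc : DifferentiableOn ℝ c (Set.Ioo (0 : ℝ) 1))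
    (hcBar : deriv c lamBar
      = (1 - ε0 - ε1) * (muHi ε0 ε1 lamBar - muLo ε0 ε1 lamBar)) :
    ∀ lam ∈ Set.Ioc (0 : ℝ) lamBar,
      ∀ (n : ℕ) (μ : Fin n → ℝ) (w : Fin n → ℝ),
        (∀ i, μ i ∈ Set.Icc (muLo ε0 ε1 lam) (muHi ε0 ε1 lam)) →
        (∀ i, 0 ≤ w i) → (∑ i, w i = 1) →
        (∑ i, w i * μ i = lam) → (∑ i, w i * fIC c lam (μ i) = 0) →
        ∑ i, w i * (μ i) ^ 2
          ≤ tauBar0 ε0 ε1 lamBar * (muLo ε0 ε1 lamBar) ^ 2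
            + tauBar1 ε0 ε1 lamBar * (muHi ε0 ε1 lamBar) ^ 2 := by

  obtain ⟨he00, he01⟩ := hε0
  obtain ⟨he10, he11⟩ := hε1
  obtain ⟨hb0, hb1⟩ := hlamBar
  intro lam hlam n μ w hrange hw hw1 hmean _hIC
  obtain ⟨hl0, hlb⟩ := hlam
  have hl1 : lam < 1 := lt_of_le_of_lt hlb hb1
  set a := muLo ε0 ε1 lam with ha
  set b := muHi ε0 ε1 lam with hb
  have hA : (0:ℝ) < (1 - lam) * (1 - ε0) + lam * ε1 :=
    add_pos (mul_pos (by linarith) (by linarith)) (mul_pos hl0 he10)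
  have hB : (0:ℝ) < (1 - lam) * ε0 + lam * (1 - ε1) :=
    add_pos (mul_pos (by linarith) he00) (mul_pos hl0 (by linarith))
  have hAb : (0:ℝ) < (1 - lamBar) * (1 - ε0) + lamBar * ε1 :=
    add_pos (mul_pos (by linarith) (by linarith)) (mul_pos hb0 he10)
  have hBb : (0:ℝ) < (1 - lamBar) * ε0 + lamBar * (1 - ε1) :=
    add_pos (mul_pos (by linarith) he00) (mul_pos hb0 (by linarith))
  have hD : (0:ℝ) < 1 - ε0 - ε1 := by linarith
  have hsq : lam ^ 2 ≤ lamBar ^ 2 := by nlinarith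
  have hAge : (1 - lamBar) * (1 - ε0) + lamBar * ε1
      ≤ (1 - lam) * (1 - ε0) + lam * ε1 := by nlinarith [mul_nonneg (sub_nonneg.2 hlb) hD.le]
  -- Step 1: variance bound
  have step1 : ∑ i, w i * (μ i) ^ 2 ≤ (a + b) * lam - a * b := by
    have h1 : ∑ i, w i * (μ i) ^ 2 ≤ ∑ i, w i * ((a + b) * μ i - a * b) := by
      apply Finset.sum_le_sum
      intro i _
      obtain ⟨hia, hib⟩ := hrange i
      have hnn : 0 ≤ (μ i - a) * (b - μ i) := mul_nonneg (by linarith) (by linarith)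
      nlinarith [hw i, mul_nonneg (hw i) hnn]
    have h2 : ∑ i, w i * ((a + b) * μ i - a * b)
        = (a + b) * (∑ i, w i * μ i) - a * b * (∑ i, w i) := by
      rw [Finset.mul_sum, Finset.mul_sum, ← Finset.sum_sub_distrib]
      exact Finset.sum_congr rfl fun i _ => by ring
    rw [h2, hmean, hw1] at h1
    linarith
  -- Step 2: identity for the variance bound
  have step2 : (a + b) * lam - a * b
      = lam ^ 2 * ε1 ^ 2 / ((1 - lam) * (1 - ε0) + lam * ε1)
        + lam ^ 2 * (1 - ε1) ^ 2 / ((1 - lam) * ε0 + lam * (1 - ε1)) := by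
    rw [ha, hb, muLo, muHi]
    field_simp
    ring
  -- Step 3: monotone comparison of the two terms
  have step3a : lam ^ 2 * ε1 ^ 2 / ((1 - lam) * (1 - ε0) + lam * ε1)
      ≤ lamBar ^ 2 * ε1 ^ 2 / ((1 - lamBar) * (1 - ε0) + lamBar * ε1) := by
    rw [div_le_div_iff₀ hA hAb]
    nlinarith [mul_nonneg (mul_nonneg (sub_nonneg.2 hsq) (sq_nonneg ε1)) hAb.le,
      mul_nonneg (mul_nonneg (sq_nonneg lamBar) (sq_nonneg ε1)) (sub_nonneg.2 hAge)]
  have step3b : lam ^ 2 * (1 - ε1) ^ 2 / ((1 - lam) * ε0 + lam * (1 - ε1))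
      ≤ lamBar ^ 2 * (1 - ε1) ^ 2 / ((1 - lamBar) * ε0 + lamBar * (1 - ε1)) := by
    rw [div_le_div_iff₀ hB hBb]
    have key : lam ^ 2 * ((1 - lamBar) * ε0 + lamBar * (1 - ε1))
        ≤ lamBar ^ 2 * ((1 - lam) * ε0 + lam * (1 - ε1)) := by
      nlinarith [mul_nonneg he00.le (sub_nonneg.2 hsq),
        mul_nonneg (mul_nonneg hD.le (mul_nonneg hl0.le hb0.le)) (sub_nonneg.2 hlb)]
    calc lam ^ 2 * (1 - ε1) ^ 2 * ((1 - lamBar) * ε0 + lamBar * (1 - ε1))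
        = (1 - ε1) ^ 2 * (lam ^ 2 * ((1 - lamBar) * ε0 + lamBar * (1 - ε1))) := by ring
      _ ≤ (1 - ε1) ^ 2 * (lamBar ^ 2 * ((1 - lam) * ε0 + lam * (1 - ε1))) :=
          mul_le_mul_of_nonneg_left key (sq_nonneg (1 - ε1))
      _ = lamBar ^ 2 * (1 - ε1) ^ 2 * ((1 - lam) * ε0 + lam * (1 - ε1)) := by ring
  -- Step 4: identity for the RHS value
  have step4 : tauBar0 ε0 ε1 lamBar * (muLo ε0 ε1 lamBar) ^ 2
        + tauBar1 ε0 ε1 lamBar * (muHi ε0 ε1 lamBar) ^ 2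
      = lamBar ^ 2 * ε1 ^ 2 / ((1 - lamBar) * (1 - ε0) + lamBar * ε1)
        + lamBar ^ 2 * (1 - ε1) ^ 2 / ((1 - lamBar) * ε0 + lamBar * (1 - ε1)) := by
    rw [tauBar0, tauBar1, muLo, muHi]
    field_simp
  rw [step4]
  rw [step2] at step1
  linarith
end
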